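/- The metric 'until' operator defined as φ U_I ψ := ⟨(φ?;τ)*⟩_I ψ has the satisfaction condition: ⟨H,T,τ⟩,k ⊨ φ U_I ψ iff there exists j with k ≤ j < λ, τ(j) − τ(k) ∈ I, ⟨H,T,τ⟩,j ⊨ ψ, and ⟨H,T,τ⟩,i ⊨ φ for all i with k ≤ i < j. -/
import Mathlib


mutual
/-- Metric dynamic formulas over atoms `A`. -/
inductive DF (A : Type) : Type
  | atom : A → DF A
  | bot  : DF A
  | conj : DF A → DF A → DF A
  | disj : DF A → DF A → DF A
  | impl : DF A → DF A → DF A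
  | diam : PE A → Set ℤ → DF A → DF A   -- ⟨ρ⟩_I φ
  | box  : PE A → Set ℤ → DF A → DF A   -- [ρ]_I φ
/-- Path expressions. -/
inductive PE (A : Type) : Type
  | step   : PE A                 -- single time step τ
  | test   : DF A → PE A          -- φ?
  | seq    : PE A → PE A → PE A   -- ρ₁;ρ₂
  | choice : PE A → PE A → PE A   -- ρ₁+ρ₂
  | star   : PE A → PE A          -- ρ*
  | conv   : PE A → PE A          -- ρ⁻
end

mutual
/-- MDHT satisfaction of metric dynamic formulas on a timed HT-trace. -/
def SatD {A : Type} (τ : ℕ → ℤ) (lam : ℕ) :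
    (ℕ → Set A) → (ℕ → Set A) → ℕ → DF A → Prop
  | H, _, k, .atom a => a ∈ H k
  | _, _, _, .bot => False
  | H, T, k, .conj φ ψ => SatD τ lam H T k φ ∧ SatD τ lam H T k ψ
  | H, T, k, .disj φ ψ => SatD τ lam H T k φ ∨ SatD τ lam H T k ψ
  | H, T, k, .impl φ ψ =>
      (SatD τ lam H T k φ → SatD τ lam H T k ψ) ∧
      (SatD τ lam T T k φ → SatD τ lam T T k ψ)
  | H, T, k, .diam ρ I φ =>
      ∃ i, RelD τ lam H T ρ k i ∧ τ i - τ k ∈ I ∧ SatD τ lam H T i φ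
  | H, T, k, .box ρ I φ =>
      (∀ i, RelD τ lam H T ρ k i → τ i - τ k ∈ I → SatD τ lam H T i φ) ∧
      (∀ i, RelD τ lam T T ρ k i → τ i - τ k ∈ I → SatD τ lam T T i φ)
/-- MDHT accessibility relation of path expressions on a timed HT-trace. -/
def RelD {A : Type} (τ : ℕ → ℤ) (lam : ℕ) :
    (ℕ → Set A) → (ℕ → Set A) → PE A → ℕ → ℕ → Prop
  | _, _, .step, k, i => i = k + 1 ∧ i < lam
  | H, T, .test φ, k, i => i = k ∧ SatD τ lam H T k φ
  | H, T, .seq ρ1 ρ2, k, i => ∃ j, RelD τ lam H T ρ1 k j ∧ RelD τ lam H T ρ2 j i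
  | H, T, .choice ρ1 ρ2, k, i => RelD τ lam H T ρ1 k i ∨ RelD τ lam H T ρ2 k i
  | H, T, .star ρ, k, i => Relation.ReflTransGen (fun a b => RelD τ lam H T ρ a b) k i
  | H, T, .conv ρ, k, i => RelD τ lam H T ρ i k
end

mutual
/-- Classical (MDL) satisfaction of metric dynamic formulas on a timed trace. -/
def SatDC {A : Type} (τ : ℕ → ℤ) (lam : ℕ) (T : ℕ → Set A) : ℕ → DF A → Prop
  | k, .atom a => a ∈ T k
  | _, .bot => False
  | k, .conj φ ψ => SatDC τ lam T k φ ∧ SatDC τ lam T k ψ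
  | k, .disj φ ψ => SatDC τ lam T k φ ∨ SatDC τ lam T k ψ
  | k, .impl φ ψ => SatDC τ lam T k φ → SatDC τ lam T k ψ
  | k, .diam ρ I φ => ∃ i, RelDC τ lam T ρ k i ∧ τ i - τ k ∈ I ∧ SatDC τ lam T i φ
  | k, .box ρ I φ => ∀ i, RelDC τ lam T ρ k i → τ i - τ k ∈ I → SatDC τ lam T i φ
/-- Classical (MDL) accessibility relation. -/
def RelDC {A : Type} (τ : ℕ → ℤ) (lam : ℕ) (T : ℕ → Set A) : PE A → ℕ → ℕ → Prop
  | .step, k, i => i = k + 1 ∧ i < lam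
  | .test φ, k, i => i = k ∧ SatDC τ lam T k φ
  | .seq ρ1 ρ2, k, i => ∃ j, RelDC τ lam T ρ1 k j ∧ RelDC τ lam T ρ2 j i
  | .choice ρ1 ρ2, k, i => RelDC τ lam T ρ1 k i ∨ RelDC τ lam T ρ2 k i
  | .star ρ, k, i => Relation.ReflTransGen (fun a b => RelDC τ lam T ρ a b) k i
  | .conv ρ, k, i => RelDC τ lam T ρ i k
end

/-- The metric until operator `φ U_I ψ := ⟨(φ?;τ)*⟩_I ψ`. -/
theorem until_satisfaction {A : Type} (H T : ℕ → Set A) (τ : ℕ → ℤ) (lam : ℕ)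
    (hτ : Monotone τ) (I : Set ℤ) (φ ψ : DF A) (k : ℕ) (hk : k < lam) :
    SatD τ lam H T k (.diam (.star (.seq (.test φ) .step)) I ψ) ↔
      (∃ j, k ≤ j ∧ j < lam ∧ τ j - τ k ∈ I ∧ SatD τ lam H T j ψ ∧
        ∀ i, k ≤ i → i < j → SatD τ lam H T i φ) := by
  constructor
  · rintro ⟨j, hrel, hI, hψ⟩
    simp only [SatD, RelD] at hrel hψ ⊢
    have key : k ≤ j ∧ j < lam ∧ ∀ i, k ≤ i → i < j → SatD τ lam H T i φ := by
      clear hI hψ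
      induction hrel with
      | refl => exact ⟨le_refl _, hk, fun i h1 h2 => absurd h2 (by omega)⟩
      | tail hab h ih =>
        obtain ⟨m, ⟨hm, hφb⟩, hb, hbl⟩ := h
        obtain ⟨h1, h2, h3⟩ := ih
        subst hm
        refine ⟨by omega, by omega, fun i hi1 hi2 => ?_⟩
        rcases Nat.lt_or_ge i m with h'|h'
        · exact h3 i hi1 h'
        · have : i = m := by omega
          subst this; exact hφb
    exact ⟨j, key.1, key.2.1, hI, hψ, key.2.2⟩
  · rintro ⟨j, hkj, hjl, hI, hψ, hφ⟩
    simp only [SatD, RelD] at hψ ⊢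
    refine ⟨j, ?_, hI, hψ⟩
    clear hI hψ
    induction j, hkj using Nat.le_induction with
    | base => exact Relation.ReflTransGen.refl
    | succ m hkm ih =>
      refine Relation.ReflTransGen.tail (ih (by omega) (fun i h1 h2 => hφ i h1 (by omega))) ?_
      exact ⟨m, ⟨rfl, hφ m hkm (by omega)⟩, rfl, hjl⟩
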